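/- Let G be a finite group with trivial Frattini subgroup. Then the centralizer of the socle of G is contained in the socle: C_G(Soc(G)) ≤ Soc(G). -/

import Mathlib

open Subgroup Pointwise

/-- `H` is a normal subgroup of `K` (both viewed as subgroups of the ambient group `G`). -/
def NormalIn {G : Type*} [Group G] (H K : Subgroup G) : Prop :=
  H ≤ K ∧ ∀ k ∈ K, ∀ h ∈ H, k * h * k⁻¹ ∈ H

/-- `H` is subnormal in `K`: there is a chain `H = c 0 ⊴ c 1 ⊴ ... ⊴ c n = K`. -/
def SubnormalIn {G : Type*} [Group G] (H K : Subgroup G) : Prop :=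
  ∃ (n : ℕ) (c : ℕ → Subgroup G), c 0 = H ∧ c n = K ∧ ∀ i < n, NormalIn (c i) (c (i + 1))

/-- The hypercenter: the limit of the upper central series. -/
def hypercenter (G : Type*) [Group G] : Subgroup G := ⨆ n, _root_.upperCentralSeries G n

/-- The nilpotent residual: the intersection of all normal subgroups with nilpotent quotient. -/
def nilpotentResidual (G : Type*) [Group G] : Subgroup G :=
  ⨅ N ∈ {N : Subgroup G |
    ∃ h : N.Normal, @Group.IsNilpotent (G ⧸ N) (@QuotientGroup.Quotient.group G _ N h)}, N

/-- The Fitting subgroup: the join of all normal nilpotent subgroups. -/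
def fitting (G : Type*) [Group G] : Subgroup G :=
  ⨆ N ∈ {N : Subgroup G | N.Normal ∧ Group.IsNilpotent N}, N

/-- `N` is a minimal normal subgroup. -/
def IsMinimalNormal {G : Type*} [Group G] (N : Subgroup G) : Prop :=
  N.Normal ∧ N ≠ ⊥ ∧ ∀ K : Subgroup G, K.Normal → K ≤ N → K = ⊥ ∨ K = N

/-- The socle: the join of all minimal normal subgroups. -/
def socle (G : Type*) [Group G] : Subgroup G :=
  ⨆ N ∈ {N : Subgroup G | IsMinimalNormal N}, N

/-- A group is supersolvable if it has a chain of normal subgroups with cyclic factors. -/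
def IsSupersolvable (G : Type*) [Group G] : Prop :=
  ∃ (n : ℕ) (c : ℕ → Subgroup G), c 0 = ⊥ ∧ c n = ⊤ ∧ (∀ i, (c i).Normal) ∧
    ∀ i < n, c i ≤ c (i + 1) ∧ ∃ g : G, c (i + 1) = c i ⊔ Subgroup.zpowers g

/-- A subgroup `H` is pronormal if `H` and each conjugate `H^g` are conjugate in their join. -/
def Pronormal {G : Type*} [Group G] (H : Subgroup G) : Prop :=
  ∀ g : G, ∃ x ∈ H ⊔ H.map (MulAut.conj g).toMonoidHom,
    H.map (MulAut.conj g).toMonoidHom = H.map (MulAut.conj x).toMonoidHom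

/-- A subgroup `H` is abnormal if `g ∈ ⟨H, H^g⟩` for all `g`. -/
def Abnormal {G : Type*} [Group G] (H : Subgroup G) : Prop :=
  ∀ g : G, g ∈ H ⊔ H.map (MulAut.conj g).toMonoidHom

/-- `Δ(G)`: the intersection of all abnormal maximal subgroups. -/
def abnormalDelta (G : Type*) [Group G] : Subgroup G :=
  ⨅ M ∈ {M : Subgroup G | IsCoatom M ∧ Abnormal M}, M

/-- The generalized Fitting subgroup `F̃(G)`: the preimage of `Soc(G/Φ(G))` in `G`. -/
def genFitting (G : Type*) [Group G] : Subgroup G :=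
  (socle (G ⧸ frattini G)).comap (QuotientGroup.mk' (frattini G))

/-- A group is `p`-decomposable if every `p`-element commutes with every `p'`-element. -/
def IsPDecomposable (p : ℕ) (K : Type*) [Group K] : Prop :=
  ∀ a b : K, (∃ n, orderOf a = p ^ n) → Nat.Coprime (orderOf b) p → Commute a b


/-!
For a normal subgroup `C` of `G`, put `D = [C, C] ∩ Z(C)`. If a maximal subgroup `M` missed `D`,
then `G = MD`, so `C = D(C ∩ M)` with `C ∩ M` normal (normalised by `M`, centralised by `D`), and
`C / (C ∩ M)` would be a quotient of the abelian group `D`; hence `D ≤ [C, C] ≤ M` after all.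
So `D ≤ Φ(G) = 1`. For `C = C_G(Soc G)`, a minimal normal subgroup of `G` inside `[C, C]` lies in
`Soc G`, hence centralises `C`, hence lies in `D = 1`; so `C` is abelian. The same splitting
`A = N(A ∩ M)`, with `N` minimal normal and `M` a maximal subgroup not containing `N` (one exists
since `Φ(G) = 1`), shows by induction that every abelian normal subgroup lies in the socle.
-/

namespace Subgroup

variable {G : Type*} [Group G]

lemma normal_inf_of_le_centralizer_of_sup_eq_top {C D M : Subgroup G} [C.Normal]
    (hD : D ≤ centralizer C) (hMD : M ⊔ D = ⊤) : (C ⊓ M).Normal := by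
  rw [← normalizer_eq_top_iff, eq_top_iff, ← hMD]
  refine sup_le ?_ ?_
  · exact (le_inf le_normalizer_of_normal le_normalizer).trans inf_normalizer_le_normalizer_inf
  · exact hD.trans ((centralizer_le inf_le_left).trans (centralizer_le_normalizer _))

lemma sup_inf_eq_of_sup_eq_top {C D M : Subgroup G} [D.Normal] (hDC : D ≤ C)
    (hMD : M ⊔ D = ⊤) : D ⊔ C ⊓ M = C := by
  apply SetLike.coe_injective
  rw [normal_mul, inf_comm, mul_inf_assoc _ _ _ hDC, ← normal_mul, sup_comm, hMD, coe_top,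
    Set.univ_inter]

lemma commutator_sup_le_of_commutator_eq_bot {B D : Subgroup G} [B.Normal] (hD : ⁅D, D⁆ = ⊥) :
    ⁅D ⊔ B, D ⊔ B⁆ ≤ B := by
  have hB : map (QuotientGroup.mk' B) B = ⊥ := by rw [map_eq_bot_iff, QuotientGroup.ker_mk']
  refine ((map_eq_bot_iff _).1 ?_).trans (QuotientGroup.ker_mk' B).le
  rw [map_commutator, map_sup, hB, sup_bot_eq, ← map_commutator, hD, map_bot]

theorem commutator_inf_centralizer_le_frattini (C : Subgroup G) [C.Normal] :
    ⁅C, C⁆ ⊓ centralizer C ≤ frattini G := by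
  set D := ⁅C, C⁆ ⊓ centralizer C
  have hDC : D ≤ C := inf_le_left.trans (commutator_le_self C)
  have hDcent : D ≤ centralizer C := inf_le_right
  have hDab : ⁅D, D⁆ = ⊥ :=
    commutator_eq_bot_iff_le_centralizer.2 (hDcent.trans (centralizer_le hDC))
  refine le_iInf₂ fun M hM => ?_
  by_contra hDM
  have hMD := codisjoint_iff.1 (hM.not_le_iff_codisjoint.1 hDM)
  have hB := normal_inf_of_le_centralizer_of_sup_eq_top hDcent hMD
  have hCC : ⁅C, C⁆ ≤ C ⊓ M := by
    simpa only [sup_inf_eq_of_sup_eq_top hDC hMD] using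
      commutator_sup_le_of_commutator_eq_bot (B := C ⊓ M) hDab
  exact hDM (inf_le_left.trans (hCC.trans inf_le_right))

lemma exists_isCoatom_sup_eq_top (hΦ : frattini G = ⊥) {N : Subgroup G} (hN : N ≠ ⊥) :
    ∃ M, IsCoatom M ∧ M ⊔ N = ⊤ := by
  by_contra! h
  exact hN (eq_bot_iff.2 (hΦ ▸ le_iInf₂ fun M hM => by_contra fun hNM =>
    h M hM (codisjoint_iff.1 (hM.not_le_iff_codisjoint.1 hNM))))

end Subgroup

section Socle

variable {G : Type*} [Group G]

instance socle_normal : (socle G).Normal :=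
  biSup_normal _ (fun N => N) fun _ hN => hN.1

lemma IsMinimalNormal.le_socle {N : Subgroup G} (hN : IsMinimalNormal N) : N ≤ socle G :=
  le_biSup (fun N => N) hN

lemma exists_isMinimalNormal_le [Finite G] {H : Subgroup G} [H.Normal] (hH : H ≠ ⊥) :
    ∃ N, IsMinimalNormal N ∧ N ≤ H := by
  obtain ⟨N, hNH, ⟨hN, hN_ne⟩, hmin⟩ :=
    exists_minimal_le_of_wellFoundedLT (fun K : Subgroup G => K.Normal ∧ K ≠ ⊥) H ⟨‹_›, hH⟩
  refine ⟨N, ⟨hN, hN_ne, fun K hK hKN => ?_⟩, hNH⟩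
  exact or_iff_not_imp_left.2 fun hK_ne => hKN.antisymm (hmin ⟨hK, hK_ne⟩ hKN)

theorem le_socle_of_commutator_eq_bot [Finite G] (hΦ : frattini G = ⊥) {A : Subgroup G}
    (hA_normal : A.Normal) (hA : ⁅A, A⁆ = ⊥) : A ≤ socle G := by
  induction A using WellFoundedLT.induction with
  | ind A ih =>
  rcases eq_or_ne A ⊥ with rfl | hA_ne
  · exact bot_le
  obtain ⟨N, hN, hNA⟩ := exists_isMinimalNormal_le hA_ne
  obtain ⟨M, hM, hMN⟩ := exists_isCoatom_sup_eq_top hΦ hN.2.1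
  have hN_normal := hN.1
  have hNcent : N ≤ centralizer A := hNA.trans (commutator_eq_bot_iff_le_centralizer.1 hA)
  have hB : (A ⊓ M).Normal := normal_inf_of_le_centralizer_of_sup_eq_top hNcent hMN
  have hBA : A ⊓ M < A := inf_le_left.lt_of_ne fun h => hM.1 <| by
    rwa [sup_eq_left.2 (hNA.trans (h ▸ inf_le_right))] at hMN
  have hB_ab : ⁅A ⊓ M, A ⊓ M⁆ = ⊥ := eq_bot_iff.2 (hA ▸ commutator_mono inf_le_left inf_le_left)
  rw [← sup_inf_eq_of_sup_eq_top hNA hMN]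
  exact sup_le hN.le_socle (ih _ hBA hB hB_ab)

end Socle

theorem centralizer_socle_le_socle_of_frattini_eq_bot {G : Type*} [Group G] [Finite G]
    (hΦ : frattini G = ⊥) :
    Subgroup.centralizer (socle G : Set G) ≤ socle G := by
  set C := centralizer (socle G : Set G)
  have hS_cent : socle G ≤ centralizer C := le_centralizer_iff.1 le_rfl
  have hCC : ⁅C, C⁆ = ⊥ := by
    by_contra hne
    obtain ⟨P, hP, hPC⟩ := exists_isMinimalNormal_le hne
    exact hP.2.1 (eq_bot_iff.2 (hΦ ▸ (le_inf hPC (hP.le_socle.trans hS_cent)).trans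
      (commutator_inf_centralizer_le_frattini C)))
  exact le_socle_of_commutator_eq_bot hΦ inferInstance hCC
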